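/- arXiv:2009.01473 — 6 statements merged into one kernel-verified Lean document; each statement's English description precedes it below -/
import Mathlib

section
/- Let R be a ring and let α be a rigid endomorphism of R. Then R is a reduced ring. -/
/-- An endomorphism `α` of a ring `R` is *rigid* if `a * α a = 0` implies `a = 0`. -/
def RingHom.IsRigid {R : Type*} [Ring R] (α : R →+* R) : Prop :=
  ∀ a : R, a * α a = 0 → a = 0

lemma sq_zero_of_rigid {R : Type*} [Ring R] {α : R →+* R}
    (hα : α.IsRigid) {a : R} (ha : a * a = 0) : a = 0 := by
  have h1 : α a * α a = 0 := by rw [← map_mul, ha, map_zero]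
  have h2 : (a * α a) * α (a * α a) = 0 := by
    rw [map_mul, mul_assoc, ← mul_assoc (α a), h1, zero_mul, mul_zero]
  exact hα a (hα _ h2)

/-- If a ring `R` admits a rigid endomorphism, then `R` is reduced. -/
theorem reduced_of_rigid (R : Type*) [Ring R] (α : R →+* R)
    (hα : α.IsRigid) : IsReduced R := by
  constructor
  intro a ha
  obtain ⟨n, hn⟩ := ha
  induction n using Nat.strong_induction_on generalizing a with
  | _ n ih =>
    match n with
    | 0 =>
      simp only [pow_zero] at hn
      calc a = a * 1 := (mul_one a).symm
        _ = a * 0 := by rw [hn]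
        _ = 0 := mul_zero a
    | 1 => simpa using hn
    | (m+2) =>
      have key : a ^ (m+1) * a ^ (m+1) = 0 := by
        rw [← pow_add]
        have : m + 1 + (m + 1) = (m + 2) + m := by ring
        rw [this, pow_add, hn, zero_mul]
      have h1 : a ^ (m+1) = 0 := sq_zero_of_rigid hα key
      exact ih (m+1) (by omega) a h1
end

section
/- Let R be a ring, let α be a rigid endomorphism of R, and let a, b ∈ R with a·b = 0. Then for every positive integer n, a·αⁿ(b) = 0 and αⁿ(a)·b = 0. -/
private lemma rigid_sq {R : Type*} [Ring R] {α : R →+* R} (hα : α.IsRigid)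
    {z : R} (hz : z * z = 0) : z = 0 := by
  have h1 : α z * α z = 0 := by rw [← map_mul, hz, map_zero]
  have h2 : (z * α z) * α (z * α z) = 0 := by
    rw [map_mul]
    calc z * α z * (α z * α (α z)) = z * (α z * α z) * α (α z) := by simp [mul_assoc]
    _ = 0 := by rw [h1, mul_zero, zero_mul]
  have := hα _ h2
  exact hα z this

private lemma rigid_comm {R : Type*} [Ring R] {α : R →+* R} (hα : α.IsRigid)
    {x y : R} (h : x * y = 0) : y * x = 0 := by
  apply rigid_sq hα
  calc y * x * (y * x) = y * (x * y) * x := by simp [mul_assoc]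
  _ = 0 := by rw [h, mul_zero, zero_mul]

private lemma rigid_step {R : Type*} [Ring R] {α : R →+* R} (hα : α.IsRigid)
    {x y : R} (h : x * y = 0) : x * α y = 0 := by
  have hyx : y * x = 0 := rigid_comm hα h
  apply hα
  rw [map_mul]
  calc x * α y * (α x * α (α y)) = x * (α y * α x) * α (α y) := by simp [mul_assoc]
  _ = x * α (y * x) * α (α y) := by rw [map_mul]
  _ = 0 := by rw [hyx, map_zero, mul_zero, zero_mul]

/-- If `α` is a rigid endomorphism of a ring `R` and `a * b = 0`, then for every
positive integer `n`, `a * α^[n] b = 0` and `α^[n] a * b = 0`. -/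
theorem rigid_iterate_annihilates (R : Type*) [Ring R] (α : R →+* R)
    (hα : α.IsRigid) (a b : R) (hab : a * b = 0) (n : ℕ) (hn : 0 < n) :
    a * (⇑α)^[n] b = 0 ∧ (⇑α)^[n] a * b = 0 := by
  clear hn
  induction n with
  | zero => exact ⟨hab, hab⟩
  | succ n ih =>
    constructor
    · rw [Function.iterate_succ_apply']
      exact rigid_step hα ih.1
    · rw [Function.iterate_succ_apply']
      have : b * (⇑α)^[n] a = 0 := rigid_comm hα ih.2
      exact rigid_comm hα (rigid_step hα this)
end

section
/- Let R be a reduced ring that satisfies the ACC on annihilators and is right Archimedean. Then the power series ring R[[x]] is reduced and right Archimedean. -/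
/-!
`R⟦X⟧` is reduced: write `f = Xᵐ g` with `g(0) ≠ 0`; as `X` is central, `fᵏ = Xᵐᵏ gᵏ`, and the
coefficient of degree `mk` is `g(0)ᵏ ≠ 0`.

For the Archimedean property let `a` be the constant coefficient of a nonunit `F`, a nonunit of `R`.
In a reduced ring the right annihilator of any element is a two-sided ideal, and `h aⁿ = 0`
forces `h a = 0`. Every coefficient of `Fⁿ` below degree `n` lies in the two-sided ideal generated
by `a`, so an induction on the degree shows: if `G = H Fⁿ` and the coefficients of `G` below
degree `m < n` vanish, then `coeff m G = coeff m H · aⁿ`. Hence if `G ∈ ⋂ₙ R⟦X⟧ Fⁿ` has vanishing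
coefficients below `m`, then `coeff m G ∈ ⋂ₙ R aⁿ = 0`.
-/

/-- A ring `R` is *right Archimedean* if for every nonunit `a ∈ R`,
`⋂ n, R·aⁿ = {0}`. -/
def RightArchimedean (R : Type*) [Ring R] : Prop :=
  ∀ a : R, ¬ IsUnit a → (⋂ n : ℕ, {x : R | ∃ r : R, x = r * a ^ n}) = {0}

/-- A ring `R` satisfies the *ACC on annihilators* if every ascending chain of
annihilator ideals `Ann(S) = {r | ∀ s ∈ S, s * r = 0}` stabilizes. -/
def AccOnAnnihilators (R : Type*) [Ring R] : Prop :=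
  ∀ f : ℕ → Set R,
    (∀ n, ∃ S : Set R, f n = {r : R | ∀ s ∈ S, s * r = 0}) →
    (∀ n, f n ⊆ f (n + 1)) →
    ∃ N, ∀ n, N ≤ n → f n = f N

namespace IsReduced

variable {R : Type*} [Ring R] [IsReduced R]

theorem mul_eq_zero_swap {a b : R} (h : a * b = 0) : b * a = 0 :=
  IsReduced.eq_zero _ ⟨2, by rw [sq, mul_assoc, ← mul_assoc a, h, zero_mul, mul_zero]⟩

theorem mul_mul_eq_zero {a b : R} (h : a * b = 0) (r : R) : a * r * b = 0 := by
  refine IsReduced.eq_zero _ ⟨2, ?_⟩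
  calc (a * r * b) ^ 2 = a * r * (b * a) * (r * b) := by noncomm_ring
    _ = 0 := by rw [mul_eq_zero_swap h, mul_zero, zero_mul]

def rightAnnihilator (h : R) : TwoSidedIdeal R :=
  .mk' {x | h * x = 0} (mul_zero h)
    (fun {x y} (hx : h * x = 0) (hy : h * y = 0) => show h * (x + y) = 0 by
      rw [mul_add, hx, hy, add_zero])
    (fun {x} (hx : h * x = 0) => show h * -x = 0 by rw [mul_neg, hx, neg_zero])
    (fun {x y} (hy : h * y = 0) => show h * (x * y) = 0 by
      rw [← mul_assoc]; exact mul_mul_eq_zero hy x)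
    (fun {x y} (hx : h * x = 0) => show h * (x * y) = 0 by rw [← mul_assoc, hx, zero_mul])

@[simp]
theorem mem_rightAnnihilator {h x : R} : x ∈ rightAnnihilator h ↔ h * x = 0 :=
  TwoSidedIdeal.mem_mk' _ _ _ _ _ _ x

theorem mul_eq_zero_of_mul_pow_eq_zero {h a : R} {n : ℕ} (hn : h * a ^ n = 0) : h * a = 0 := by
  -- `x * a ^ k = 0` lets one insert a factor `h` in front of each `a`.
  have key : ∀ k (x : R), x * a ^ k = 0 → x * (h * a) ^ k = 0 := by
    intro k
    induction k with
    | zero => simp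
    | succ k ih =>
      intro x hx
      rw [pow_succ', ← mul_assoc]
      exact ih _ (by simpa only [mul_assoc, pow_succ'] using mul_mul_eq_zero hx h)
  refine IsReduced.eq_zero _ ⟨n + 1, ?_⟩
  rw [pow_succ']
  exact mul_mul_eq_zero (key n h hn) a

end IsReduced

namespace PowerSeries

variable {R : Type*} [Ring R]

instance [IsReduced R] : IsReduced R⟦X⟧ := by
  refine ⟨fun f ⟨k, hk⟩ => ?_⟩
  by_contra hf
  set g := divXPowOrder f
  set m := f.order.toNat
  have hfg : f ^ k = X ^ (m * k) * g ^ k := by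
    rw [← X_pow_order_mul_divXPowOrder (f := f), ((commute_X_pow g m).symm).mul_pow, ← pow_mul]
  have hg : constantCoeff g ^ k = 0 := by
    rw [← map_pow, ← coeff_zero_eq_constantCoeff_apply, ← coeff_X_pow_mul _ (m * k), zero_add,
      ← hfg, hk, map_zero]
  exact hf (constantCoeff_divXPowOrder_eq_zero_iff.mp (IsReduced.eq_zero _ ⟨k, hg⟩))

theorem coeff_pow_mem_of_constantCoeff_mem (I : TwoSidedIdeal R) {F : R⟦X⟧}
    (hF : constantCoeff F ∈ I) {u n : ℕ} (hu : u < n) : coeff u (F ^ n) ∈ I := by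
  induction n generalizing u with
  | zero => omega
  | succ n ih =>
    rw [pow_succ, coeff_mul]
    refine sum_mem fun ⟨i, j⟩ hij => ?_
    rw [Finset.HasAntidiagonal.mem_antidiagonal] at hij
    rcases lt_or_ge i n with hi | hi
    · exact I.mul_mem_right _ _ (ih hi)
    · obtain rfl : j = 0 := by omega
      exact I.mul_mem_left _ _ (by rwa [coeff_zero_eq_constantCoeff_apply])

variable [IsReduced R]

theorem mul_coeff_pow_eq_zero {h : R} {F : R⟦X⟧} (hh : h * constantCoeff F = 0) {u n : ℕ}
    (hu : u < n) : h * coeff u (F ^ n) = 0 :=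
  IsReduced.mem_rightAnnihilator.mp <| coeff_pow_mem_of_constantCoeff_mem _
    (IsReduced.mem_rightAnnihilator.mpr hh) hu

theorem coeff_mul_pow_of_forall_lt {H F : R⟦X⟧} {m n : ℕ}
    (hH : ∀ i < m, coeff i H * constantCoeff F = 0) (hmn : m < n) :
    coeff m (H * F ^ n) = coeff m H * constantCoeff F ^ n := by
  rw [coeff_mul, Finset.sum_eq_single_of_mem (m, 0) (by simp)]
  · rw [coeff_zero_eq_constantCoeff_apply, map_pow]
  rintro ⟨i, u⟩ hiu hne
  rw [Finset.HasAntidiagonal.mem_antidiagonal] at hiu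
  have hi : i < m := by
    by_contra! him
    exact hne (Prod.ext (by omega) (by omega))
  exact mul_coeff_pow_eq_zero (hH i hi) (by omega)

theorem coeff_mul_constantCoeff_eq_zero {H F : R⟦X⟧} {m n : ℕ}
    (hG : ∀ i < m, coeff i (H * F ^ n) = 0) (hmn : m ≤ n) :
    ∀ i < m, coeff i H * constantCoeff F = 0 := by
  intro i
  induction i using Nat.strong_induction_on with
  | _ i ih =>
    intro hi
    refine IsReduced.mul_eq_zero_of_mul_pow_eq_zero (n := n) ?_
    rw [← coeff_mul_pow_of_forall_lt (fun j hj => ih j hj (hj.trans hi)) (by omega)]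
    exact hG i hi

theorem coeff_eq_coeff_mul_pow {G H F : R⟦X⟧} {m n : ℕ} (hGH : G = H * F ^ n)
    (hG : ∀ i < m, coeff i G = 0) (hmn : m < n) :
    coeff m G = coeff m H * constantCoeff F ^ n := by
  subst hGH
  exact coeff_mul_pow_of_forall_lt (coeff_mul_constantCoeff_eq_zero hG hmn.le) hmn

theorem rightArchimedean (harch : RightArchimedean R) : RightArchimedean R⟦X⟧ := by
  intro F hF
  have ha : ¬IsUnit (constantCoeff F) := fun h => hF (isUnit_iff_constantCoeff.mpr h)
  refine Set.eq_singleton_iff_unique_mem.mpr ⟨Set.mem_iInter.mpr fun n => ⟨0, (zero_mul _).symm⟩,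
    fun G hG => ?_⟩
  ext m
  induction m using Nat.strong_induction_on with
  | _ m ih =>
    rw [map_zero, ← Set.mem_singleton_iff, ← harch _ ha, Set.mem_iInter]
    intro k
    obtain ⟨H, hH⟩ := Set.mem_iInter.mp hG (max k (m + 1))
    refine ⟨coeff m H * constantCoeff F ^ (max k (m + 1) - k), ?_⟩
    rw [coeff_eq_coeff_mul_pow hH (fun i hi => by simpa using ih i hi) (by omega), mul_assoc,
      ← pow_add, Nat.sub_add_cancel (le_max_left _ _)]

end PowerSeries

theorem powerSeries_rightArchimedean_reduced_general (R : Type*) [Ring R] [IsReduced R]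
    (harch : RightArchimedean R) :
    IsReduced (PowerSeries R) ∧ RightArchimedean (PowerSeries R) :=
  ⟨inferInstance, PowerSeries.rightArchimedean harch⟩

/-- If `R` is a reduced ring satisfying the ACC on annihilators which is right
Archimedean, then the power series ring `R[[x]]` is reduced and right Archimedean. -/
theorem powerSeries_rightArchimedean_reduced (R : Type*) [Ring R] [IsReduced R]
    (hacc : AccOnAnnihilators R) (harch : RightArchimedean R) :
    IsReduced (PowerSeries R) ∧ RightArchimedean (PowerSeries R) :=
  powerSeries_rightArchimedean_reduced_general R harch
end

section
/- Let R be a reduced ring that satisfies the ACC on annihilators and is left Archimedean. Then the power series ring R[[x]] is reduced and left Archimedean. -/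
/-!
In a reduced ring, `P_c = {r | c * r = 0}` is a two-sided ideal, and when `c ≠ 0` and `P_c` is
maximal among the annihilators of nonzero elements, it is completely prime. By the ACC on
annihilators every nonzero `d` avoids such a `P_c`, so it suffices to show that if `F` is not a
unit and `Fⁿ ∣ g` for all `n`, then `g` maps to zero in `(R ⧸ P_c)⟦X⟧`. If `F(0) ∈ P_c`, the
image of `g` has arbitrarily large order. Otherwise, over the domain `R ⧸ P_c`, the lowest
nonzero coefficient of the image of `g = Fⁿ h`, say of index `m`, is `F(0)ⁿ` times a coefficient
of `h`. Since `P_c` is also the left annihilator of `c`, lifting back gives `F(0)ⁿ ∣ g_m * c`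
for every `n`, so `g_m * c = 0` because `R` is left Archimedean, that is, `g_m ∈ P_c`.
-/

/-- A ring `R` is *left Archimedean* if for every nonunit `a ∈ R`,
`⋂ n, aⁿ·R = {0}`. -/
def LeftArchimedean (R : Type*) [Ring R] : Prop :=
  ∀ a : R, ¬ IsUnit a → (⋂ n : ℕ, {x : R | ∃ r : R, x = a ^ n * r}) = {0}

section Reduced

variable {R : Type*} [MonoidWithZero R] [IsReduced R] {a b : R}

theorem IsReduced.mul_eq_zero_comm : a * b = 0 ↔ b * a = 0 := by
  suffices ∀ a b : R, a * b = 0 → b * a = 0 from ⟨this a b, this b a⟩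
  intro a b h
  refine eq_zero_of_pow_eq_zero (n := 2) ?_
  rw [sq, mul_assoc, ← mul_assoc a, h, zero_mul, mul_zero]

theorem IsReduced.mul_mul_eq_zero_s3 (h : a * b = 0) (x : R) : a * x * b = 0 := by
  refine eq_zero_of_pow_eq_zero (n := 2) ?_
  rw [sq, mul_assoc, ← mul_assoc b, ← mul_assoc b, IsReduced.mul_eq_zero_comm.1 h]
  simp

end Reduced

section Ring

variable {R : Type*} [Ring R]

theorem leftArchimedean_iff :
    LeftArchimedean R ↔ ∀ a x : R, ¬IsUnit a → (∀ n, a ^ n ∣ x) → x = 0 := by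
  refine ⟨fun h a x ha hx => ?_, fun h a ha => ?_⟩
  · have : x ∈ ⋂ n : ℕ, {x : R | ∃ r, x = a ^ n * r} := Set.mem_iInter.2 hx
    rwa [h a ha] at this
  · refine Set.eq_singleton_iff_unique_mem.2 ⟨Set.mem_iInter.2 fun n => ⟨0, (mul_zero _).symm⟩,
      fun x hx => h a x ha (Set.mem_iInter.1 hx)⟩

end Ring

section Annihilator

variable {R : Type*} [Ring R] [IsReduced R]

def rightAnnihilator (c : R) : Ideal R where
  carrier := {r | c * r = 0}
  add_mem' {r s} hr hs := by simp_all [mul_add]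
  zero_mem' := mul_zero c
  smul_mem' x r hr := by simpa [mul_assoc] using IsReduced.mul_mul_eq_zero_s3 hr x

@[simp]
theorem mem_rightAnnihilator {c r : R} : r ∈ rightAnnihilator c ↔ c * r = 0 := Iff.rfl

instance (c : R) : (rightAnnihilator c).IsTwoSided where
  mul_mem_of_left b hr := by simp_all [← mul_assoc]

theorem isPrime_rightAnnihilator {c : R} (hc : c ≠ 0)
    (hmax : ∀ e ≠ 0, rightAnnihilator c ≤ rightAnnihilator e →
      rightAnnihilator e ≤ rightAnnihilator c) :
    (rightAnnihilator c).IsPrime where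
  ne_top' h := hc (by simpa using (Ideal.eq_top_iff_one _).1 h)
  mem_or_mem' {x y} hxy := by
    simp only [mem_rightAnnihilator] at hxy ⊢
    by_contra! h
    refine h.2 (hmax (c * x) h.1 (fun r hr => ?_) (by simpa [mul_assoc] using hxy))
    exact IsReduced.mul_mul_eq_zero_s3 hr x

theorem AccOnAnnihilators.exists_maximal_rightAnnihilator (hacc : AccOnAnnihilators R) {d : R}
    (hd : d ≠ 0) :
    ∃ c ≠ 0, rightAnnihilator d ≤ rightAnnihilator c ∧
      ∀ e ≠ 0, rightAnnihilator c ≤ rightAnnihilator e →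
        rightAnnihilator e ≤ rightAnnihilator c := by
  let Ann := {I : Ideal R // ∃ e, I = rightAnnihilator e}
  have : WellFoundedGT Ann := wellFoundedGT_iff_monotone_chain_condition.2 fun A => by
    obtain ⟨N, hN⟩ := hacc (fun n => (A n : Set R))
      (fun n => by obtain ⟨e, he⟩ := (A n).2; exact ⟨{e}, by rw [he]; ext; simp⟩)
      (fun n => A.mono n.le_succ)
    exact ⟨N, fun m hm => Subtype.ext (SetLike.coe_injective (hN m hm).symm)⟩
  let ann (e : R) : Ann := ⟨rightAnnihilator e, e, rfl⟩
  obtain ⟨_, ⟨c, ⟨hc, hdc⟩, rfl⟩, hmax⟩ := wellFounded_gt.has_min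
    (ann '' {e | e ≠ 0 ∧ rightAnnihilator d ≤ rightAnnihilator e}) ⟨_, d, ⟨hd, le_rfl⟩, rfl⟩
  exact ⟨c, hc, hdc, fun e he hce =>
    by_contra fun hec => hmax (ann e) ⟨e, ⟨he, hdc.trans hce⟩, rfl⟩ (lt_of_le_not_ge hce hec)⟩

theorem AccOnAnnihilators.exists_isPrime_rightAnnihilator (hacc : AccOnAnnihilators R) {d : R}
    (hd : d ≠ 0) : ∃ c, (rightAnnihilator c).IsPrime ∧ d ∉ rightAnnihilator c := by
  obtain ⟨c, hc, hdc, hmax⟩ := hacc.exists_maximal_rightAnnihilator hd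
  refine ⟨c, isPrime_rightAnnihilator hc hmax, fun hcd => hc ?_⟩
  have hcc : c * c = 0 := hdc (IsReduced.mul_eq_zero_comm.1 hcd)
  exact eq_zero_of_pow_eq_zero ((sq c).trans hcc)

end Annihilator

namespace PowerSeries

variable {R : Type*} [Semiring R]

theorem coeff_add_mul_of_forall_lt {φ ψ : R⟦X⟧} {m n : ℕ} (hφ : ∀ i < m, coeff i φ = 0)
    (hψ : ∀ j < n, coeff j ψ = 0) : coeff (m + n) (φ * ψ) = coeff m φ * coeff n ψ := by
  rw [coeff_mul, Finset.sum_eq_single_of_mem (m, n) (by simp)]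
  rintro ⟨i, j⟩ hij hne
  rw [Finset.HasAntidiagonal.mem_antidiagonal] at hij
  rcases lt_or_ge i m with hi | hi
  · rw [hφ i hi, zero_mul]
  · rw [hψ j (by grind), mul_zero]

instance inst_s3 [IsReduced R] : IsReduced R⟦X⟧ := by
  refine (isReduced_iff_pow_one_lt 2 one_lt_two).2 fun φ hφ => ?_
  by_contra hφ0
  have hsq := coeff_add_mul_of_forall_lt (coeff_of_lt_order_toNat (φ := φ))
    (coeff_of_lt_order_toNat (φ := φ))
  rw [← sq, hφ, map_zero, ← sq] at hsq
  exact coeff_order hφ0 (eq_zero_of_pow_eq_zero hsq.symm)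

theorem eq_zero_of_forall_pow_dvd_of_constantCoeff_eq_zero {φ ψ : R⟦X⟧}
    (hφ : constantCoeff φ = 0) (hψ : ∀ n, φ ^ n ∣ ψ) : ψ = 0 := by
  ext k
  obtain ⟨χ, hχ⟩ := hψ (k + 1)
  rw [map_zero]
  refine coeff_of_lt_order k ?_
  calc (k : ℕ∞) < (k + 1 : ℕ) := by norm_cast; omega
    _ ≤ order (φ ^ (k + 1)) := le_order_pow_of_constantCoeff_eq_zero _ hφ
    _ ≤ order (φ ^ (k + 1)) + order χ := le_self_add
    _ ≤ order ψ := hχ ▸ le_order_mul _ _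

theorem exists_coeff_order_eq_constantCoeff_mul_of_dvd [NoZeroDivisors R] {φ ψ : R⟦X⟧}
    (hφ : constantCoeff φ ≠ 0) (hψ : φ ∣ ψ) :
    ∃ r, coeff ψ.order.toNat ψ = constantCoeff φ * r := by
  obtain ⟨χ, rfl⟩ := hψ
  have hφ0 : φ.order = 0 := not_not.1 (mt order_ne_zero_iff_constCoeff_eq_zero.1 hφ)
  refine ⟨coeff χ.order.toNat χ, ?_⟩
  rw [order_mul, hφ0, zero_add]
  simpa using coeff_add_mul_of_forall_lt (m := 0) (by simp) (coeff_of_lt_order_toNat (φ := χ))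

end PowerSeries

section Archimedean

open PowerSeries

variable {R : Type*} [Ring R] [IsReduced R]

theorem LeftArchimedean.map_eq_zero_of_forall_pow_dvd (harch : LeftArchimedean R) {c : R}
    [(rightAnnihilator c).IsPrime] {F g : R⟦X⟧} (hF : ¬IsUnit F) (hg : ∀ n, F ^ n ∣ g) :
    map (Ideal.Quotient.mk (rightAnnihilator c)) g = 0 := by
  set π := Ideal.Quotient.mk (rightAnnihilator c)
  set a := constantCoeff F
  have ha : ¬IsUnit a := mt isUnit_iff_constantCoeff.2 hF
  have hgπ : ∀ n, map π F ^ n ∣ map π g := fun n => map_pow (map π) F n ▸ map_dvd (map π) (hg n)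
  have hπF : constantCoeff (map π F) = π a := by
    rw [← coeff_zero_eq_constantCoeff_apply, coeff_map, coeff_zero_eq_constantCoeff_apply]
  by_cases hπa : π a = 0
  · exact eq_zero_of_forall_pow_dvd_of_constantCoeff_eq_zero (hπF ▸ hπa) hgπ
  by_contra hne
  set m := (map π g).order.toNat
  have hdvd : ∀ n, a ^ n ∣ coeff m g * c := by
    intro n
    obtain ⟨r, hr⟩ := exists_coeff_order_eq_constantCoeff_mul_of_dvd
      (by simpa [hπF] using pow_ne_zero n hπa) (hgπ n)
    obtain ⟨r, rfl⟩ := Ideal.Quotient.mk_surjective r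
    have : c * (coeff m g - a ^ n * r) = 0 := by
      rw [← mem_rightAnnihilator, ← Ideal.Quotient.eq]
      simpa [hπF, m] using hr
    refine ⟨r * c, ?_⟩
    rw [← mul_assoc, ← sub_eq_zero, ← sub_mul]
    exact IsReduced.mul_eq_zero_comm.1 this
  have hgm : c * coeff m g = 0 :=
    IsReduced.mul_eq_zero_comm.2 (leftArchimedean_iff.1 harch a _ ha hdvd)
  exact coeff_order hne (by simpa [π, Ideal.Quotient.eq_zero_iff_mem] using hgm)

end Archimedean

/-- If `R` is a reduced ring satisfying the ACC on annihilators which is left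
Archimedean, then the power series ring `R[[x]]` is reduced and left Archimedean. -/
theorem powerSeries_leftArchimedean_reduced (R : Type*) [Ring R] [IsReduced R]
    (hacc : AccOnAnnihilators R) (harch : LeftArchimedean R) :
    IsReduced (PowerSeries R) ∧ LeftArchimedean (PowerSeries R) := by
  refine ⟨inferInstance, leftArchimedean_iff.2 fun F g hF hg => ?_⟩
  ext k
  rw [map_zero]
  by_contra hk
  obtain ⟨c, hc, hkc⟩ := hacc.exists_isPrime_rightAnnihilator hk
  have := congrArg (PowerSeries.coeff k) (harch.map_eq_zero_of_forall_pow_dvd (c := c) hF hg)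
  exact hkc (by simpa [Ideal.Quotient.eq_zero_iff_mem] using this)
end

section
/- Let Γ be a linearly ordered, cancellative, additive commutative monoid and let R be a ring. If the Hahn series ring HahnSeries(Γ, R) is a right Archimedean domain, then R is a right Archimedean domain. -/
/-!
`C : R →+* HahnSeries Γ R` is injective, so `R` inherits being a domain. Over a domain the
leading coefficient is multiplicative, so it maps a unit `C a` to the unit `a`; hence a nonunit
`a` stays a nonunit `C a`, and any `x ∈ ⋂ₙ R·aⁿ` gives `C x ∈ ⋂ₙ R⟦Γ⟧·(C a)ⁿ = {0}`.
-/

theorem RightArchimedean.of_injective {R S : Type*} [Ring R] [Ring S] (hS : RightArchimedean S)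
    (f : R →+* S) (hf : Function.Injective f) (hunit : ∀ a, IsUnit (f a) → IsUnit a) :
    RightArchimedean R := by
  intro a ha
  refine Set.eq_singleton_iff_unique_mem.2 ⟨Set.mem_iInter.2 fun n ↦ ⟨0, (zero_mul _).symm⟩, ?_⟩
  intro x hx
  have hfx : f x ∈ ⋂ n : ℕ, {y : S | ∃ s : S, y = s * f a ^ n} := by
    refine Set.mem_iInter.2 fun n ↦ ?_
    obtain ⟨r, rfl⟩ := Set.mem_iInter.1 hx n
    exact ⟨f r, by rw [map_mul, map_pow]⟩
  rw [hS (f a) (mt (hunit a) ha), Set.mem_singleton_iff] at hfx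
  exact hf (hfx.trans (map_zero f).symm)

namespace HahnSeries

variable {Γ R : Type*} [AddCommMonoid Γ] [LinearOrder Γ] [IsOrderedCancelAddMonoid Γ]
  [Semiring R] [NoZeroDivisors R]

noncomputable def leadingCoeffHom : HahnSeries Γ R →* R where
  toFun := leadingCoeff
  map_one' := leadingCoeff_one
  map_mul' x y := leadingCoeff_mul x y

theorem isUnit_of_isUnit_C {a : R} (h : IsUnit (C a : HahnSeries Γ R)) : IsUnit a := by
  simpa [leadingCoeffHom, C_apply, leadingCoeff_of_single] using h.map (leadingCoeffHom (Γ := Γ))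

end HahnSeries

/-- If the Hahn series ring `HahnSeries Γ R` is a right Archimedean domain, then `R`
is a right Archimedean domain. -/
theorem rightArchimedean_domain_of_hahnSeries (Γ : Type*)
    [AddCommMonoid Γ] [LinearOrder Γ] [IsOrderedCancelAddMonoid Γ] (R : Type*) [Ring R]
    (hdom : IsDomain (HahnSeries Γ R)) (harch : RightArchimedean (HahnSeries Γ R)) :
    IsDomain R ∧ RightArchimedean R := by
  have hC : Function.Injective (HahnSeries.C : R →+* HahnSeries Γ R) := HahnSeries.C_injective
  have hR : IsDomain R := hC.isDomain HahnSeries.C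
  exact ⟨hR, harch.of_injective HahnSeries.C hC fun _ ↦ HahnSeries.isUnit_of_isUnit_C⟩
end

section
/- Let Γ be a linearly ordered, cancellative, additive commutative monoid and let R be a ring. Let f be a nonzero element of the Hahn series ring HahnSeries(Γ, R), let π(f) ∈ Γ be the smallest element of the support of f, and let θ(f) = f(π(f)) be the corresponding leading coefficient. If π(f) is an additive unit of Γ (i.e., has an additive inverse in Γ) and θ(f) is a unit of R, then f is a unit of HahnSeries(Γ, R). -/
/-!
Multiplying `f` by the unit `single (-π f) (θ f)⁻¹` gives a series `g` with `g.orderTop = 0` and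
leading coefficient `1`, so `x = 1 - g` has positive order. The powers of `x` then form a summable
family whose sum `∑ xⁿ` is a two-sided inverse of `1 - x`: it is a right inverse by the telescoping
identity `∑ xⁿ = 1 + x * ∑ xⁿ`, and a left one because it commutes with `x`, as each `xⁿ` does.
-/

open Finset

namespace HahnSeries

theorem SummableFamily.commute_hsum {Γ R α : Type*} [AddCommMonoid Γ] [PartialOrder Γ]
    [IsOrderedCancelAddMonoid Γ] [Semiring R] {x : R⟦Γ⟧} {s : SummableFamily Γ R α}
    (hs : ∀ a, Commute x (s a)) : Commute x s.hsum := by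
  have hswap : Equiv (Equiv.prodComm α Unit) (mul s (const Unit x)) = mul (const Unit x) s :=
    ext fun _ => (hs _).symm.eq
  show x * s.hsum = s.hsum * x
  simpa only [hsum_equiv, hsum_mul, hsum_unique, const_toFun] using (congrArg hsum hswap).symm

theorem isUnit_single {Γ R : Type*} [AddCommMonoid Γ] [PartialOrder Γ]
    [IsOrderedCancelAddMonoid Γ] [Semiring R] {a : Γ} {r : R} (ha : IsAddUnit a) (hr : IsUnit r) :
    IsUnit (single a r) := by
  obtain ⟨a, rfl⟩ := ha
  obtain ⟨r, rfl⟩ := hr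
  refine isUnit_iff_exists.2 ⟨single ↑(-a) ↑r⁻¹, ?_, ?_⟩
  · rw [single_mul_single, AddUnits.add_neg, Units.mul_inv, single_zero_one]
  · rw [single_mul_single, AddUnits.neg_add, Units.inv_mul, single_zero_one]

section Semiring

variable {Γ R : Type*} [AddCommMonoid Γ] [LinearOrder Γ] [IsOrderedCancelAddMonoid Γ] [Semiring R]

theorem finite_setOf_coeff_pow_ne_zero {x : R⟦Γ⟧} (hx : 0 < x.orderTop) (g : Γ) :
    {n : ℕ | (x ^ n).coeff g ≠ 0}.Finite := by
  set S := ⋃ n : ℕ, (x ^ n).support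
  have hS : S.IsPWO := SummableFamily.isPWO_iUnion_support_powers (zero_le_orderTop_iff.mp hx.le)
  by_cases hg : g ∈ S
  swap
  · exact Set.finite_empty.subset fun n hn => hg (Set.mem_iUnion.2 ⟨n, hn⟩)
  refine hS.isWF.induction (P := fun g => {n : ℕ | (x ^ n).coeff g ≠ 0}.Finite) hg
    fun g _ ih => ?_
  -- a nonzero coefficient of `x ^ (n + 1) = x * x ^ n` at `g` comes from some `g = i + j`
  -- with `0 < i`, so `n` lies in the finite set attached to the smaller exponent `j`
  have hsub : {n : ℕ | (x ^ n).coeff g ≠ 0} ⊆ insert 0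
      (⋃ ij ∈ antidiagonal x.isPWO_support hS g, Nat.succ '' {n | (x ^ n).coeff ij.2 ≠ 0}) := by
    rintro (_ | n) hn
    · exact Set.mem_insert 0 _
    · rw [Set.mem_ofPred_eq, pow_succ'] at hn
      obtain ⟨i, hi, j, hj, rfl⟩ := support_mul_subset hn
      refine Set.mem_insert_of_mem 0 (Set.mem_biUnion (x := (i, j)) ?_ ⟨n, hj, rfl⟩)
      exact mem_antidiagonal.2 ⟨hi, Set.mem_iUnion.2 ⟨n, hj⟩, rfl⟩
  refine Set.Finite.subset (Set.Finite.insert 0 ((antidiagonal _ _ g).finite_toSet.biUnion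
    fun ij hij => (ih ij.2 ?_ ?_).image _)) hsub
  all_goals obtain ⟨hi, hj, rfl⟩ := mem_antidiagonal.1 (mem_coe.1 hij)
  · exact hj
  · exact lt_add_of_pos_left ij.2
      (WithTop.coe_lt_coe.1 (hx.trans_le (orderTop_le_of_coeff_ne_zero hi)))

/-- Unlike `SummableFamily.powers`, this needs no commutativity of `R`. -/
@[simps]
noncomputable def powersFamily (x : R⟦Γ⟧) (hx : 0 < x.orderTop) : SummableFamily Γ R ℕ where
  toFun n := x ^ n
  isPWO_iUnion_support' :=
    SummableFamily.isPWO_iUnion_support_powers (zero_le_orderTop_iff.mp hx.le)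
  finite_co_support' := finite_setOf_coeff_pow_ne_zero hx

variable {x : R⟦Γ⟧} (hx : 0 < x.orderTop)

theorem powersFamily_eq_single_add_embDomain :
    powersFamily x hx = SummableFamily.single 0 1 +
      (x • powersFamily x hx).embDomain ⟨Nat.succ, Nat.succ_injective⟩ := by
  refine SummableFamily.ext fun n => ?_
  cases n with
  | zero => simp
  | succ n =>
    rw [SummableFamily.add_apply, SummableFamily.single_toFun,
      Pi.single_eq_of_ne n.succ_ne_zero, zero_add]
    refine Eq.trans ?_ (SummableFamily.embDomain_image _ ⟨Nat.succ, Nat.succ_injective⟩).symm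
    rw [SummableFamily.smul_apply, of_symm_smul_of_eq_mul, powersFamily_toFun, powersFamily_toFun,
      pow_succ']

theorem hsum_powersFamily : (powersFamily x hx).hsum = 1 + x * (powersFamily x hx).hsum := by
  conv_lhs => rw [powersFamily_eq_single_add_embDomain hx]
  rw [SummableFamily.hsum_add, SummableFamily.hsum_single, SummableFamily.hsum_embDomain,
    SummableFamily.hsum_smul]

theorem commute_hsum_powersFamily : Commute x (powersFamily x hx).hsum :=
  SummableFamily.commute_hsum fun n => Commute.self_pow x n

end Semiring

section Ring

variable {Γ R : Type*} [AddCommMonoid Γ] [LinearOrder Γ] [IsOrderedCancelAddMonoid Γ] [Ring R]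

theorem isUnit_one_sub_of_orderTop_pos {x : R⟦Γ⟧} (hx : 0 < x.orderTop) : IsUnit (1 - x) := by
  have hinv : (1 - x) * (powersFamily x hx).hsum = 1 := by
    rw [sub_mul, one_mul, sub_eq_iff_eq_add]
    exact hsum_powersFamily hx
  refine isUnit_iff_exists.2 ⟨_, hinv, ?_⟩
  rw [← ((Commute.one_left _).sub_left (commute_hsum_powersFamily hx)).eq, hinv]

theorem isUnit_of_isUnit_leadingCoeff_of_isAddUnit_order {f : R⟦Γ⟧}
    (hθ : IsUnit f.leadingCoeff) (hπ : IsAddUnit f.order) : IsUnit f := by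
  obtain _ | _ := subsingleton_or_nontrivial R
  · exact isUnit_of_subsingleton f
  have hf : f ≠ 0 := leadingCoeff_ne_zero.1 hθ.ne_zero
  set u : R⟦Γ⟧ := single ↑(-hπ.addUnit) (↑hθ.unit⁻¹ : R)
  have hu : IsUnit u := isUnit_single (AddUnits.isAddUnit _) (Units.isUnit _)
  have hlc : u.leadingCoeff * f.leadingCoeff = 1 := by
    rw [leadingCoeff_of_single, hθ.val_inv_mul]
  have huf : 0 < (u * f - 1).orderTop := by
    refine (orderTop_self_sub_one_pos_iff _).2 ⟨?_, ?_⟩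
    · rw [orderTop_mul_of_ne_zero (hlc ▸ one_ne_zero), orderTop_single (Units.ne_zero _),
        ← order_eq_orderTop_of_ne_zero hf, ← WithTop.coe_add, hπ.val_neg_add, WithTop.coe_zero]
    · rw [leadingCoeff_mul_of_ne_zero (hlc ▸ one_ne_zero), hlc]
  have huf_unit : IsUnit (u * f) := by
    have h := isUnit_one_sub_of_orderTop_pos (x := 1 - u * f) (by rwa [← orderTop_neg, neg_sub])
    rwa [sub_sub_cancel] at h
  exact (hu.unit.isUnit_units_mul f).1 (by rwa [hu.unit_spec])

end Ring

end HahnSeries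

open HahnSeries

/-- Let `f` be a nonzero Hahn series, let `π f` be the smallest element of its
support and `θ f = f.coeff (π f)` the leading coefficient. If `π f` is an additive
unit of `Γ` and `θ f` is a unit of `R`, then `f` is a unit of `HahnSeries Γ R`. -/
theorem hahnSeries_isUnit_of_leading (Γ : Type*)
    [AddCommMonoid Γ] [LinearOrder Γ] [IsOrderedCancelAddMonoid Γ] (R : Type*) [Ring R]
    (f : HahnSeries Γ R) (hf : f ≠ 0)
    (hπ : IsAddUnit (f.isWF_support.min (HahnSeries.support_nonempty_iff.mpr hf)))
    (hθ : IsUnit (f.coeff (f.isWF_support.min (HahnSeries.support_nonempty_iff.mpr hf)))) :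
    IsUnit f := by
  rw [← order_of_ne hf] at hπ
  rw [← order_of_ne hf, ← leadingCoeff_eq] at hθ
  exact isUnit_of_isUnit_leadingCoeff_of_isAddUnit_order hθ hπ
end
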